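/- In every orthomodular lattice L the following generalization of equation E*₂ holds: for all a₁, b₁, a₂, b₂, r ∈ L, if a₁ C b₁, a₂ C b₂, r C a₁, a₁ ⊥ a₂, and a₂ C r, then (a₁ ∪ a₂ ∪ r) ∩ (a₁ ∪ b₁) ∩ (a₂ ∪ b₂) ≤ b₁ ∪ b₂ ∪ r. -/
import Mathlib


/-- An ortholattice: a bounded lattice with an orthocomplementation. -/
class Ortholattice (α : Type*) extends Lattice α, BoundedOrder α where
  ocompl : α → α
  sup_ocompl : ∀ a : α, a ⊔ ocompl a = ⊤
  inf_ocompl : ∀ a : α, a ⊓ ocompl a = ⊥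
  ocompl_anti : ∀ a b : α, a ≤ b → ocompl b ≤ ocompl a
  ocompl_ocompl : ∀ a : α, ocompl (ocompl a) = a

postfix:max "ᗮ" => Ortholattice.ocompl

/-- An orthomodular lattice. -/
class OrthomodularLattice (α : Type*) extends Ortholattice α where
  orthomodular : ∀ a b : α, a ≤ b → b = a ⊔ (aᗮ ⊓ b)

/-- The Sasaki hook `x → y = x′ ∪ (x ∩ y)`. -/
def oimp {α : Type*} [Ortholattice α] (x y : α) : α := xᗮ ⊔ (x ⊓ y)

/-- `a` commutes with `b`. -/
def Commutes {α : Type*} [Ortholattice α] (a b : α) : Prop := a ⊓ (aᗮ ⊔ b) ≤ b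

namespace OMLAux

variable {α : Type*}

section Ortho
variable [Ortholattice α]

lemma oc_oc (a : α) : aᗮᗮ = a := Ortholattice.ocompl_ocompl a

lemma oc_anti {a b : α} (h : a ≤ b) : bᗮ ≤ aᗮ := Ortholattice.ocompl_anti a b h

lemma le_oc_swap {a b : α} (h : a ≤ bᗮ) : b ≤ aᗮ := by
  have := oc_anti h; rwa [oc_oc] at this

lemma oc_sup (a b : α) : (a ⊔ b)ᗮ = aᗮ ⊓ bᗮ := by
  apply le_antisymm
  · exact le_inf (oc_anti le_sup_left) (oc_anti le_sup_right)
  · exact le_oc_swap (sup_le (le_oc_swap inf_le_left) (le_oc_swap inf_le_right))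

lemma oc_inf (a b : α) : (a ⊓ b)ᗮ = aᗮ ⊔ bᗮ := by
  have h := oc_sup aᗮ bᗮ
  rw [oc_oc, oc_oc] at h
  rw [← h, oc_oc]

lemma le_bot_of_le_oc {x a : α} (h1 : x ≤ a) (h2 : x ≤ aᗮ) : x ≤ ⊥ := by
  have : x ≤ a ⊓ aᗮ := le_inf h1 h2
  rwa [Ortholattice.inf_ocompl] at this

end Ortho

section OML
variable [OrthomodularLattice α]

lemma om {a b : α} (h : a ≤ b) : b = a ⊔ (aᗮ ⊓ b) :=
  OrthomodularLattice.orthomodular a b h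

lemma comm_of_le {a b : α} (h : a ≤ b) : Commutes a b :=
  le_trans inf_le_left h

lemma comm_of_ge {a b : α} (h : b ≤ a) : Commutes a b := by
  have h2 : aᗮ ≤ bᗮ := oc_anti h
  have h3 := om h2
  have h4 : b = a ⊓ (aᗮ ⊔ b) := by
    have h5 := congrArg Ortholattice.ocompl h3
    rw [oc_oc, oc_sup, oc_inf, oc_oc, oc_oc] at h5
    exact h5
  exact le_of_eq h4.symm

/-- cancellation: if `e ≤ fᗮ` then `(e ⊔ f) ⊓ fᗮ ≤ e`. -/
lemma cancel_le {e f : α} (h : e ≤ fᗮ) : (e ⊔ f) ⊓ fᗮ ≤ e := by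
  have he : e ≤ (e ⊔ f) ⊓ fᗮ := le_inf le_sup_left h
  have hom := om he
  have hb : eᗮ ⊓ ((e ⊔ f) ⊓ fᗮ) ≤ ⊥ := by
    apply le_bot_of_le_oc (a := e ⊔ f)
    · exact inf_le_right.trans inf_le_left
    · rw [oc_sup]
      exact le_inf inf_le_left (inf_le_right.trans inf_le_right)
  calc (e ⊔ f) ⊓ fᗮ = e ⊔ (eᗮ ⊓ ((e ⊔ f) ⊓ fᗮ)) := hom
    _ ≤ e ⊔ ⊥ := sup_le_sup_left hb e
    _ = e := sup_bot_eq e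

lemma decomp_of_comm {a b : α} (h : Commutes a b) : a ≤ (a ⊓ b) ⊔ (a ⊓ bᗮ) := by
  set d := (a ⊓ b) ⊔ (a ⊓ bᗮ) with hd_def
  have hd : d ≤ a := sup_le inf_le_left inf_le_left
  have hom := om hd
  have hz : dᗮ ⊓ a ≤ ⊥ := by
    have hx1 : dᗮ ≤ aᗮ ⊔ b := by
      have hx0 : a ⊓ bᗮ ≤ d := le_sup_right
      have hx2 := oc_anti hx0
      rwa [oc_inf, oc_oc] at hx2
    have hx2 : dᗮ ⊓ a ≤ b := by
      calc dᗮ ⊓ a ≤ a ⊓ (aᗮ ⊔ b) := le_inf inf_le_right (inf_le_left.trans hx1)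
        _ ≤ b := h
    have hx3 : dᗮ ⊓ a ≤ d := le_trans (le_inf inf_le_right hx2) le_sup_left
    exact le_bot_of_le_oc (a := d) hx3 inf_le_left
  calc a = d ⊔ (dᗮ ⊓ a) := hom
    _ ≤ d ⊔ ⊥ := sup_le_sup_left hz d
    _ = d := sup_bot_eq d

lemma comm_of_decomp {a b : α} (h : a ≤ (a ⊓ b) ⊔ (a ⊓ bᗮ)) : Commutes a b := by
  show a ⊓ (aᗮ ⊔ b) ≤ b
  have hf : (a ⊓ bᗮ)ᗮ = aᗮ ⊔ b := by rw [oc_inf, oc_oc]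
  have he : a ⊓ b ≤ (a ⊓ bᗮ)ᗮ := by
    rw [hf]; exact inf_le_right.trans le_sup_right
  have hc := cancel_le he
  rw [hf] at hc
  calc a ⊓ (aᗮ ⊔ b) ≤ ((a ⊓ b) ⊔ (a ⊓ bᗮ)) ⊓ (aᗮ ⊔ b) :=
        inf_le_inf_right _ h
    _ ≤ a ⊓ b := hc
    _ ≤ b := inf_le_right

lemma comm_symm {a b : α} (h : Commutes a b) : Commutes b a := by
  apply comm_of_decomp
  have hab := decomp_of_comm h
  set c := (b ⊓ a) ⊔ (b ⊓ aᗮ) with hc_def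
  have hc : c ≤ b := sup_le inf_le_left inf_le_left
  have hom := om hc
  have hz : cᗮ ⊓ b ≤ ⊥ := by
    set z := cᗮ ⊓ b with hz_def
    have hz1 : z ≤ (a ⊓ b)ᗮ := by
      have hx : a ⊓ b ≤ c := by rw [inf_comm]; exact le_sup_left
      exact inf_le_left.trans (oc_anti hx)
    have hz2 : z ≤ (a ⊓ bᗮ)ᗮ := by
      have hx : a ⊓ bᗮ ≤ bᗮ := inf_le_right
      have hx2 := oc_anti hx
      rw [oc_oc] at hx2
      exact inf_le_right.trans hx2
    have hz3 : z ≤ aᗮ := by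
      have hx : z ≤ ((a ⊓ b) ⊔ (a ⊓ bᗮ))ᗮ := by
        rw [oc_sup]; exact le_inf hz1 hz2
      exact hx.trans (oc_anti hab)
    have hz4 : z ≤ b ⊓ aᗮ := le_inf inf_le_right hz3
    have hz5 : z ≤ (b ⊓ aᗮ)ᗮ := by
      have hx : b ⊓ aᗮ ≤ c := le_sup_right
      exact inf_le_left.trans (oc_anti hx)
    exact le_bot_of_le_oc hz4 hz5
  calc b = c ⊔ (cᗮ ⊓ b) := hom
    _ ≤ c ⊔ ⊥ := sup_le_sup_left hz c
    _ = c := sup_bot_eq c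

lemma comm_compl {a b : α} (h : Commutes a b) : Commutes a bᗮ := by
  apply comm_of_decomp
  have hx := decomp_of_comm h
  rwa [oc_oc, sup_comm]

/-- Foulis–Holland, outer element commutes with both. -/
lemma FH1 {a b c : α} (hb : Commutes a b) (hc : Commutes a c) :
    a ⊓ (b ⊔ c) ≤ (a ⊓ b) ⊔ (a ⊓ c) := by
  set u := (a ⊓ b) ⊔ (a ⊓ c) with hu_def
  set v := a ⊓ (b ⊔ c) with hv_def
  have hu : u ≤ v :=
    sup_le (le_inf inf_le_left (inf_le_right.trans le_sup_left))
           (le_inf inf_le_left (inf_le_right.trans le_sup_right))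
  have hom := om hu
  have hw : uᗮ ⊓ v ≤ ⊥ := by
    set w := uᗮ ⊓ v with hw_def
    have hwb : w ≤ bᗮ := by
      have hx1 : uᗮ ≤ aᗮ ⊔ bᗮ := by
        have hx0 : a ⊓ b ≤ u := le_sup_left
        have hx2 := oc_anti hx0
        rwa [oc_inf] at hx2
      have hx2 : w ≤ a ⊓ (aᗮ ⊔ bᗮ) :=
        le_inf (inf_le_right.trans inf_le_left) (inf_le_left.trans hx1)
      exact hx2.trans (comm_compl hb)
    have hwc : w ≤ cᗮ := by
      have hx1 : uᗮ ≤ aᗮ ⊔ cᗮ := by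
        have hx0 : a ⊓ c ≤ u := le_sup_right
        have hx2 := oc_anti hx0
        rwa [oc_inf] at hx2
      have hx2 : w ≤ a ⊓ (aᗮ ⊔ cᗮ) :=
        le_inf (inf_le_right.trans inf_le_left) (inf_le_left.trans hx1)
      exact hx2.trans (comm_compl hc)
    have hwbc : w ≤ (b ⊔ c)ᗮ := by rw [oc_sup]; exact le_inf hwb hwc
    exact le_bot_of_le_oc (a := b ⊔ c) (inf_le_right.trans inf_le_right) hwbc
  calc v = u ⊔ (uᗮ ⊓ v) := hom
    _ ≤ u ⊔ ⊥ := sup_le_sup_left hw u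
    _ = u := sup_bot_eq u

/-- Foulis–Holland, one summand commutes with the other two terms. -/
lemma FH1' {x y z : α} (hyx : Commutes y x) (hyz : Commutes y z) :
    x ⊓ (y ⊔ z) ≤ (x ⊓ y) ⊔ (x ⊓ z) := by
  set u := (x ⊓ y) ⊔ (x ⊓ z) with hu_def
  set v := x ⊓ (y ⊔ z) with hv_def
  have hu : u ≤ v :=
    sup_le (le_inf inf_le_left (inf_le_right.trans le_sup_left))
           (le_inf inf_le_left (inf_le_right.trans le_sup_right))
  have hom := om hu
  have hw : uᗮ ⊓ v ≤ ⊥ := by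
    set w := uᗮ ⊓ v with hw_def
    have hwy : w ≤ yᗮ := by
      have hx1 : uᗮ ≤ xᗮ ⊔ yᗮ := by
        have hx0 : x ⊓ y ≤ u := le_sup_left
        have hx2 := oc_anti hx0
        rwa [oc_inf] at hx2
      have hx2 : w ≤ x ⊓ (xᗮ ⊔ yᗮ) :=
        le_inf (inf_le_right.trans inf_le_left) (inf_le_left.trans hx1)
      exact hx2.trans (comm_compl (comm_symm hyx))
    have hyy : Commutes yᗮ y := by
      show yᗮ ⊓ (yᗮᗮ ⊔ y) ≤ y
      rw [oc_oc, sup_idem, inf_comm, Ortholattice.inf_ocompl]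
      exact bot_le
    have hyz' : Commutes yᗮ z := comm_symm (comm_compl (comm_symm hyz))
    have hwz : w ≤ z := by
      have hx1 : w ≤ yᗮ ⊓ (y ⊔ z) :=
        le_inf hwy (inf_le_right.trans inf_le_right)
      calc w ≤ yᗮ ⊓ (y ⊔ z) := hx1
        _ ≤ (yᗮ ⊓ y) ⊔ (yᗮ ⊓ z) := FH1 hyy hyz'
        _ ≤ ⊥ ⊔ z := by
            apply sup_le_sup
            · rw [inf_comm, Ortholattice.inf_ocompl]
            · exact inf_le_right
        _ = z := bot_sup_eq z
    have hwu : w ≤ u := le_trans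
      (le_inf (inf_le_right.trans inf_le_left) hwz) le_sup_right
    exact le_bot_of_le_oc (a := u) hwu inf_le_left
  calc v = u ⊔ (uᗮ ⊓ v) := hom
    _ ≤ u ⊔ ⊥ := sup_le_sup_left hw u
    _ = u := sup_bot_eq u

/-- dual Foulis–Holland: middle element commutes with both. -/
lemma FH2 {a y z : α} (hy : Commutes a y) (hz : Commutes a z) :
    (y ⊔ a) ⊓ (z ⊔ a) ≤ (y ⊓ z) ⊔ a := by
  have hay : Commutes aᗮ yᗮ := comm_compl (comm_symm (comm_compl (comm_symm hy)))
  have haz : Commutes aᗮ zᗮ := comm_compl (comm_symm (comm_compl (comm_symm hz)))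
  have h1 : aᗮ ⊓ (yᗮ ⊔ zᗮ) ≤ (aᗮ ⊓ yᗮ) ⊔ (aᗮ ⊓ zᗮ) := FH1 hay haz
  have h2 : ((y ⊓ z) ⊔ a)ᗮ ≤ ((y ⊔ a) ⊓ (z ⊔ a))ᗮ := by
    rw [oc_sup, oc_inf, oc_inf, oc_sup, oc_sup]
    calc (yᗮ ⊔ zᗮ) ⊓ aᗮ = aᗮ ⊓ (yᗮ ⊔ zᗮ) := inf_comm _ _
      _ ≤ (aᗮ ⊓ yᗮ) ⊔ (aᗮ ⊓ zᗮ) := h1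
      _ ≤ (yᗮ ⊓ aᗮ) ⊔ (zᗮ ⊓ aᗮ) := by rw [inf_comm aᗮ yᗮ, inf_comm aᗮ zᗮ]
  have h3 := oc_anti h2
  rwa [oc_oc, oc_oc] at h3

lemma comm_sup {a b c : α} (hb : Commutes a b) (hc : Commutes a c) :
    Commutes a (b ⊔ c) := by
  show a ⊓ (aᗮ ⊔ (b ⊔ c)) ≤ b ⊔ c
  have h1 : Commutes a (aᗮ ⊔ b) := by
    show a ⊓ (aᗮ ⊔ (aᗮ ⊔ b)) ≤ aᗮ ⊔ b
    rw [← sup_assoc, sup_idem]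
    exact le_trans hb le_sup_right
  calc a ⊓ (aᗮ ⊔ (b ⊔ c)) = a ⊓ ((aᗮ ⊔ b) ⊔ c) := by rw [sup_assoc]
    _ ≤ (a ⊓ (aᗮ ⊔ b)) ⊔ (a ⊓ c) := FH1 h1 hc
    _ ≤ b ⊔ c := sup_le (le_trans hb le_sup_left) (inf_le_right.trans le_sup_right)

lemma comm_inf {a b c : α} (hb : Commutes a b) (hc : Commutes a c) :
    Commutes a (b ⊓ c) := by
  have h1 : Commutes a (bᗮ ⊔ cᗮ) := comm_sup (comm_compl hb) (comm_compl hc)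
  have h2 := comm_compl h1
  rwa [oc_sup, oc_oc, oc_oc] at h2

end OML

end OMLAux

open OMLAux in
theorem Estar2_generalized {α : Type*} [OrthomodularLattice α]
    (a₁ b₁ a₂ b₂ r : α)
    (h1 : Commutes a₁ b₁) (h2 : Commutes a₂ b₂) (h3 : Commutes r a₁)
    (h4 : a₁ ≤ a₂ᗮ) (h5 : Commutes a₂ r) :
    (a₁ ⊔ a₂ ⊔ r) ⊓ (a₁ ⊔ b₁) ⊓ (a₂ ⊔ b₂) ≤ b₁ ⊔ b₂ ⊔ r := by
  have hc_a1r : Commutes a₁ r := comm_symm h3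
  have hc_a1a2 : Commutes a₁ a₂ := by
    have h := comm_compl (comm_of_le h4)
    rwa [oc_oc] at h
  have hc1' : Commutes a₁ (b₁ ⊔ r) := comm_sup h1 hc_a1r
  have hc2' : Commutes a₂ (b₂ ⊔ r) := comm_sup h2 h5
  have hcX : Commutes a₁ (a₂ ⊔ r) := comm_sup hc_a1a2 hc_a1r
  set t := (a₂ ⊔ r) ⊓ (b₁ ⊔ r) with ht_def
  -- Step 0: enlarge the two right-hand factors
  have step0 : (a₁ ⊔ a₂ ⊔ r) ⊓ (a₁ ⊔ b₁) ⊓ (a₂ ⊔ b₂) ≤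
      ((a₁ ⊔ a₂ ⊔ r) ⊓ (a₁ ⊔ (b₁ ⊔ r))) ⊓ (a₂ ⊔ (b₂ ⊔ r)) := by
    apply le_inf
    · apply le_inf (inf_le_left.trans inf_le_left)
      exact (inf_le_left.trans inf_le_right).trans
        (sup_le_sup_left le_sup_left a₁)
    · exact inf_le_right.trans (sup_le_sup_left le_sup_left a₂)
  -- Step 1: FH2 with middle element a₁
  have step1 : (a₁ ⊔ a₂ ⊔ r) ⊓ (a₁ ⊔ (b₁ ⊔ r)) ≤ t ⊔ a₁ := by
    have h := FH2 hcX hc1'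
    calc (a₁ ⊔ a₂ ⊔ r) ⊓ (a₁ ⊔ (b₁ ⊔ r))
        = ((a₂ ⊔ r) ⊔ a₁) ⊓ ((b₁ ⊔ r) ⊔ a₁) := by
          rw [sup_assoc, sup_comm a₁ (a₂ ⊔ r), sup_comm a₁ (b₁ ⊔ r)]
      _ ≤ ((a₂ ⊔ r) ⊓ (b₁ ⊔ r)) ⊔ a₁ := h
  -- Step 2: FH1' with summand t
  have ht_le : t ≤ a₂ ⊔ (b₂ ⊔ r) := by
    refine inf_le_left.trans (sup_le le_sup_left ?_)
    exact le_sup_right.trans le_sup_right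
  have ht_x : Commutes t (a₂ ⊔ (b₂ ⊔ r)) := comm_of_le ht_le
  have ht_a1 : Commutes t a₁ := comm_symm (comm_inf hcX hc1')
  have step2 : (a₂ ⊔ (b₂ ⊔ r)) ⊓ (t ⊔ a₁) ≤
      t ⊔ ((a₂ ⊔ (b₂ ⊔ r)) ⊓ a₁) := by
    calc (a₂ ⊔ (b₂ ⊔ r)) ⊓ (t ⊔ a₁)
        ≤ ((a₂ ⊔ (b₂ ⊔ r)) ⊓ t) ⊔ ((a₂ ⊔ (b₂ ⊔ r)) ⊓ a₁) := FH1' ht_x ht_a1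
      _ ≤ t ⊔ ((a₂ ⊔ (b₂ ⊔ r)) ⊓ a₁) := sup_le_sup_right inf_le_right _
  -- Step 3
  have step3 : (a₂ ⊔ (b₂ ⊔ r)) ⊓ a₁ ≤ b₂ ⊔ r := by
    have h := FH1' (comm_symm hc_a1a2) hc2'
    have hbot : a₁ ⊓ a₂ ≤ ⊥ :=
      le_bot_of_le_oc (a := a₂) inf_le_right (inf_le_left.trans h4)
    calc (a₂ ⊔ (b₂ ⊔ r)) ⊓ a₁ = a₁ ⊓ (a₂ ⊔ (b₂ ⊔ r)) := inf_comm _ _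
      _ ≤ (a₁ ⊓ a₂) ⊔ (a₁ ⊓ (b₂ ⊔ r)) := h
      _ ≤ ⊥ ⊔ (b₂ ⊔ r) := sup_le_sup hbot inf_le_right
      _ = b₂ ⊔ r := bot_sup_eq _
  -- put it together
  have hfin : t ⊔ (b₂ ⊔ r) ≤ b₁ ⊔ b₂ ⊔ r := by
    apply sup_le
    · refine inf_le_right.trans (sup_le ?_ le_sup_right)
      exact le_sup_left.trans le_sup_left
    · exact sup_le (le_sup_right.trans le_sup_left) le_sup_right
  calc (a₁ ⊔ a₂ ⊔ r) ⊓ (a₁ ⊔ b₁) ⊓ (a₂ ⊔ b₂)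
      ≤ ((a₁ ⊔ a₂ ⊔ r) ⊓ (a₁ ⊔ (b₁ ⊔ r))) ⊓ (a₂ ⊔ (b₂ ⊔ r)) := step0
    _ ≤ (t ⊔ a₁) ⊓ (a₂ ⊔ (b₂ ⊔ r)) := inf_le_inf_right _ step1
    _ = (a₂ ⊔ (b₂ ⊔ r)) ⊓ (t ⊔ a₁) := inf_comm _ _
    _ ≤ t ⊔ ((a₂ ⊔ (b₂ ⊔ r)) ⊓ a₁) := step2
    _ ≤ t ⊔ (b₂ ⊔ r) := sup_le_sup_left step3 t
    _ ≤ b₁ ⊔ b₂ ⊔ r := hfin
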